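/- arXiv:2604.26440 — 4 statements merged into one kernel-verified Lean document; each statement's English description precedes it below -/
import Mathlib

section
/- The antiderivative identity ∫₀ˣ t^ℓ(1−t)^r dt = Σ_{i=0}^{r} [ℓ! r! / ((r−i)! (ℓ+i+1)!)] x^{ℓ+i+1}(1−x)^{r−i} holds for all real x and all non-negative integers ℓ, r. -/
/-! The right-hand side `F ℓ r x` vanishes at `0`, so it suffices that `F ℓ r` is an
antiderivative of `t ^ ℓ * (1 - t) ^ r`. Splitting off the `i = 0` term gives the recursion
`F ℓ (r + 1) = x ^ (ℓ + 1) (1 - x) ^ (r + 1) / (ℓ + 1) + (r + 1) / (ℓ + 1) · F (ℓ + 1) r`,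
which is integration by parts in disguise; differentiating it, the two `x ^ (ℓ + 1) (1 - x) ^ r`
terms cancel, and induction on `r` (for all `ℓ` at once) finishes. -/

open Finset

noncomputable def betaAntideriv (ℓ r : ℕ) (x : ℝ) : ℝ :=
  ∑ i ∈ range (r + 1),
    ((ℓ.factorial * r.factorial : ℝ) / ((r - i).factorial * (ℓ + i + 1).factorial)) *
      x ^ (ℓ + i + 1) * (1 - x) ^ (r - i)

theorem betaAntideriv_zero_right (ℓ : ℕ) (x : ℝ) :
    betaAntideriv ℓ 0 x = x ^ (ℓ + 1) / (ℓ + 1) := by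
  simp only [betaAntideriv, zero_add, range_one, sum_singleton, Nat.sub_zero, Nat.factorial_zero,
    add_zero, pow_zero, mul_one, Nat.factorial_succ]
  push_cast
  field_simp

theorem betaAntideriv_succ_right (ℓ r : ℕ) (x : ℝ) :
    betaAntideriv ℓ (r + 1) x =
      x ^ (ℓ + 1) * (1 - x) ^ (r + 1) / (ℓ + 1) + (r + 1) / (ℓ + 1) * betaAntideriv (ℓ + 1) r x := by
  rw [betaAntideriv, sum_range_succ', betaAntideriv, mul_sum, add_comm]
  congr 1
  · simp only [Nat.sub_zero, add_zero, Nat.factorial_succ]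
    push_cast
    field_simp
  · refine sum_congr rfl fun i _ => ?_
    rw [Nat.add_sub_add_right, show ℓ + (i + 1) + 1 = ℓ + 1 + i + 1 by ring]
    simp only [Nat.factorial_succ ℓ, Nat.factorial_succ r]
    push_cast
    field_simp

theorem hasDerivAt_betaAntideriv (ℓ r : ℕ) (x : ℝ) :
    HasDerivAt (betaAntideriv ℓ r) (x ^ ℓ * (1 - x) ^ r) x := by
  induction r generalizing ℓ with
  | zero =>
    rw [funext (betaAntideriv_zero_right ℓ)]
    refine ((hasDerivAt_pow (ℓ + 1) x).div_const ((ℓ : ℝ) + 1)).congr_deriv ?_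
    push_cast
    field_simp
  | succ r ih =>
    rw [funext (betaAntideriv_succ_right ℓ r)]
    have hboundary := ((hasDerivAt_pow (ℓ + 1) x).mul
      (((hasDerivAt_id' x).const_sub 1).fun_pow (r + 1))).div_const ((ℓ : ℝ) + 1)
    refine (hboundary.add ((ih (ℓ + 1)).const_mul (((r : ℝ) + 1) / (ℓ + 1)))).congr_deriv ?_
    push_cast
    field_simp
    ring

theorem beta_antiderivative (ℓ r : ℕ) (x : ℝ) :
    (∫ t in (0:ℝ)..x, t ^ ℓ * (1 - t) ^ r) =
      ∑ i ∈ Finset.range (r + 1),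
        ((ℓ.factorial * r.factorial : ℝ) / ((r - i).factorial * (ℓ + i + 1).factorial)) *
          x ^ (ℓ + i + 1) * (1 - x) ^ (r - i) := by
  have hint : IntervalIntegrable (fun t : ℝ => t ^ ℓ * (1 - t) ^ r) MeasureTheory.volume 0 x :=
    (by fun_prop : Continuous fun t : ℝ => t ^ ℓ * (1 - t) ^ r).intervalIntegrable 0 x
  rw [intervalIntegral.integral_eq_sub_of_hasDerivAt (fun t _ => hasDerivAt_betaAntideriv ℓ r t) hint]
  simp [betaAntideriv]
end

section
/- The rational B-function R_{ℓ,r}(x) = x^{ℓ+1}/(x^{ℓ+1} + (1−x)^{r+1}) is a smooth step function of orders ℓ and r: it is a strictly increasing C^∞ map from [0,1] onto [0,1] with R_{ℓ,r}(0) = 0, R_{ℓ,r}(1) = 1, its derivatives of orders 1 through ℓ vanish at 0, and its derivatives of orders 1 through r vanish at 1. -/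
open Set Filter Topology

noncomputable def rationalB (ℓ r : ℕ) (x : ℝ) : ℝ :=
  x ^ (ℓ + 1) / (x ^ (ℓ + 1) + (1 - x) ^ (r + 1))

lemma rB_denom_pos {ℓ r : ℕ} {x : ℝ} (hx : x ∈ Set.Icc (0:ℝ) 1) :
    0 < x ^ (ℓ + 1) + (1 - x) ^ (r + 1) := by
  obtain ⟨h0, h1⟩ := hx
  rcases h0.lt_or_eq with h | h
  · exact add_pos_of_pos_of_nonneg (pow_pos h _) (pow_nonneg (by linarith) _)
  · have : x = 0 := h.symm
    subst this
    norm_num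

/-- The open set where the denominator doesn't vanish. -/
def rBU (ℓ r : ℕ) : Set ℝ := {x : ℝ | x ^ (ℓ + 1) + (1 - x) ^ (r + 1) ≠ 0}

lemma rBU_open (ℓ r : ℕ) : IsOpen (rBU ℓ r) := by
  have : Continuous fun x : ℝ => x ^ (ℓ + 1) + (1 - x) ^ (r + 1) := by continuity
  exact isOpen_ne_fun this continuous_const

lemma Icc_subset_rBU (ℓ r : ℕ) : Set.Icc (0:ℝ) 1 ⊆ rBU ℓ r :=
  fun _ hx => (rB_denom_pos hx).ne'

lemma rB_denom_contDiff (ℓ r : ℕ) :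
    ContDiff ℝ (⊤ : ℕ∞) fun x : ℝ => x ^ (ℓ + 1) + (1 - x) ^ (r + 1) :=
  (contDiff_id.pow _).add ((contDiff_const.sub contDiff_id).pow _)

lemma rB_contDiffOn (ℓ r : ℕ) : ContDiffOn ℝ (⊤ : ℕ∞) (rationalB ℓ r) (rBU ℓ r) := by
  apply ContDiffOn.div
  · exact (contDiff_id.pow _).contDiffOn
  · exact (rB_denom_contDiff ℓ r).contDiffOn
  · exact fun x hx => hx

lemma iteratedDerivWithin_eq_iteratedDeriv_of_isOpen
    {f : ℝ → ℝ} {U s : Set ℝ} {x : ℝ} (n : ℕ)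
    (hU : IsOpen U) (hf : ContDiffOn ℝ (⊤ : ℕ∞) f U) (hsU : s ⊆ U)
    (hs : UniqueDiffOn ℝ s) (hx : x ∈ s) :
    iteratedDerivWithin n f s x = iteratedDeriv n f x := by
  have hT : HasFTaylorSeriesUpToOn (n : ℕ∞) f (ftaylorSeriesWithin ℝ f U) U :=
    (hf.of_le (by exact_mod_cast le_top)).ftaylorSeriesWithin hU.uniqueDiffOn
  have h1 : iteratedFDerivWithin ℝ n f s x = ftaylorSeriesWithin ℝ f U x n :=
    ((hT.mono hsU).eq_iteratedFDerivWithin_of_uniqueDiffOn le_rfl hs hx).symm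
  have h2 : ftaylorSeriesWithin ℝ f U x n = iteratedFDeriv ℝ n f x :=
    iteratedFDerivWithin_of_isOpen n hU (hsU hx)
  rw [iteratedDerivWithin_eq_iteratedFDerivWithin, iteratedDeriv_eq_iteratedFDeriv, h1, h2]

lemma iteratedDeriv_pow_mul {U : Set ℝ} (hU : IsOpen U) :
    ∀ (n m : ℕ) (g : ℝ → ℝ), ContDiffOn ℝ (⊤ : ℕ∞) g U →
    ∃ h : ℝ → ℝ, ContDiffOn ℝ (⊤ : ℕ∞) h U ∧
      ∀ x ∈ U, iteratedDeriv n (fun y => y ^ (n + m + 1) * g y) x = x ^ (m + 1) * h x := by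
  intro n
  induction n with
  | zero =>
    intro m g hg
    exact ⟨g, hg, fun x _ => by simp⟩
  | succ n ih =>
    intro m g hg
    have hg' : ContDiffOn ℝ (⊤ : ℕ∞) (deriv g) U := hg.deriv_of_isOpen hU (by simp)
    obtain ⟨h, hh, hhx⟩ := ih m (fun y => ((n : ℝ) + m + 2) * g y + y * deriv g y)
      ((contDiffOn_const.mul hg).add (contDiffOn_id.mul hg'))
    refine ⟨h, hh, fun x hx => ?_⟩
    rw [iteratedDeriv_succ']
    have key : iteratedDeriv n (deriv fun y => y ^ (n + 1 + m + 1) * g y) x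
        = iteratedDeriv n
            (fun y => y ^ (n + m + 1) * (((n : ℝ) + m + 2) * g y + y * deriv g y)) x := by
      apply Filter.EventuallyEq.iteratedDeriv_eq
      filter_upwards [hU.mem_nhds hx] with y hy
      have hgy : DifferentiableAt ℝ g y :=
        (hg.differentiableOn (by simp)).differentiableAt (hU.mem_nhds hy)
      rw [deriv_fun_mul (differentiableAt_pow _) hgy, deriv_pow_field]
      push_cast
      ring
    rw [key, hhx x hx]

lemma rationalB_iteratedDeriv_zero (ℓ r j : ℕ) (hj : j ≤ ℓ) :
    iteratedDeriv j (rationalB ℓ r) 0 = 0 := by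
  have hg : ContDiffOn ℝ (⊤ : ℕ∞) (fun x : ℝ => (x ^ (ℓ+1) + (1-x)^(r+1))⁻¹) (rBU ℓ r) :=
    (rB_denom_contDiff ℓ r).contDiffOn.inv (fun x hx => hx)
  obtain ⟨h, hh, hhx⟩ := iteratedDeriv_pow_mul (rBU_open ℓ r) j (ℓ - j) _ hg
  have h0 : (0:ℝ) ∈ rBU ℓ r := Icc_subset_rBU ℓ r (by norm_num)
  have hfun : rationalB ℓ r
      = fun y : ℝ => y ^ (j + (ℓ - j) + 1) * (y ^ (ℓ+1) + (1-y)^(r+1))⁻¹ := by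
    funext y
    rw [rationalB, div_eq_mul_inv]
    congr 2
    omega
  rw [hfun, hhx 0 h0]
  simp

lemma rationalB_symm {ℓ r : ℕ} {y : ℝ} (hy : y ∈ rBU ℓ r) :
    rationalB ℓ r y = 1 - rationalB r ℓ (1 - y) := by
  have hD : y ^ (ℓ+1) + (1-y) ^ (r+1) ≠ 0 := hy
  have hD' : (1-y) ^ (r+1) + y ^ (ℓ+1) ≠ 0 := by rwa [add_comm]
  simp only [rationalB]
  have h1 : (1:ℝ) - (1 - y) = y := by ring
  rw [h1, add_comm ((1 - y) ^ (r + 1)) (y ^ (ℓ + 1)), eq_sub_iff_add_eq,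
    ← add_div, div_self hD]

lemma rationalB_iteratedDeriv_one (ℓ r k : ℕ) (hk1 : 1 ≤ k) (hk : k ≤ r) :
    iteratedDeriv k (rationalB ℓ r) 1 = 0 := by
  have hU1 : (1:ℝ) ∈ rBU ℓ r := Icc_subset_rBU ℓ r (by norm_num)
  have e1 : iteratedDeriv k (rationalB ℓ r) 1
      = iteratedDeriv k (fun x => 1 - rationalB r ℓ (1 - x)) 1 := by
    apply Filter.EventuallyEq.iteratedDeriv_eq
    filter_upwards [(rBU_open ℓ r).mem_nhds hU1] with y hy
    exact rationalB_symm hy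
  have e2 : iteratedDeriv k (fun x => 1 - rationalB r ℓ (1 - x)) 1
      = iteratedDeriv k (fun x => -(rationalB r ℓ (1 - x))) 1 := by
    rw [← iteratedDerivWithin_univ, ← iteratedDerivWithin_univ]
    exact iteratedDerivWithin_const_sub hk1 1
  set H : ℝ → ℝ := fun z => rationalB r ℓ (1 + z) with hH
  have e3 : (fun x : ℝ => rationalB r ℓ (1 - x)) = fun x => H (-x) := by
    funext x; simp [hH, sub_eq_add_neg]
  have e4 : iteratedDeriv k H (-1) = iteratedDeriv k (rationalB r ℓ) (1 + -1) :=
    congrFun (iteratedDeriv_comp_const_add k (rationalB r ℓ) 1) (-1)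
  rw [e1, e2, iteratedDeriv_fun_neg, e3, iteratedDeriv_comp_neg, e4]
  norm_num
  exact rationalB_iteratedDeriv_zero r ℓ k hk

theorem rationalB_smooth_step (ℓ r : ℕ) :
    StrictMonoOn (rationalB ℓ r) (Set.Icc (0:ℝ) 1) ∧
    ContDiffOn ℝ (⊤ : ℕ∞) (rationalB ℓ r) (Set.Icc (0:ℝ) 1) ∧
    rationalB ℓ r 0 = 0 ∧ rationalB ℓ r 1 = 1 ∧
    Set.MapsTo (rationalB ℓ r) (Set.Icc (0:ℝ) 1) (Set.Icc (0:ℝ) 1) ∧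
    Set.SurjOn (rationalB ℓ r) (Set.Icc (0:ℝ) 1) (Set.Icc (0:ℝ) 1) ∧
    (∀ j : ℕ, 1 ≤ j → j ≤ ℓ →
      iteratedDerivWithin j (rationalB ℓ r) (Set.Icc (0:ℝ) 1) 0 = 0) ∧
    (∀ k : ℕ, 1 ≤ k → k ≤ r →
      iteratedDerivWithin k (rationalB ℓ r) (Set.Icc (0:ℝ) 1) 1 = 0) := by
  have hsub := Icc_subset_rBU ℓ r
  have hcd : ContDiffOn ℝ (⊤ : ℕ∞) (rationalB ℓ r) (Set.Icc (0:ℝ) 1) :=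
    (rB_contDiffOn ℓ r).mono hsub
  have h0 : rationalB ℓ r 0 = 0 := by simp [rationalB]
  have h1 : rationalB ℓ r 1 = 1 := by simp [rationalB]
  have hmono : StrictMonoOn (rationalB ℓ r) (Set.Icc (0:ℝ) 1) := by
    intro x hx y hy hxy
    have hDx := rB_denom_pos (ℓ := ℓ) (r := r) hx
    have hDy := rB_denom_pos (ℓ := ℓ) (r := r) hy
    rw [rationalB, rationalB, div_lt_div_iff₀ hDx hDy]
    have key : x ^ (ℓ+1) * (1 - y) ^ (r+1) < y ^ (ℓ+1) * (1 - x) ^ (r+1) := by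
      rcases hx.1.lt_or_eq with hx0 | hx0
      · rcases hy.2.eq_or_lt with hy1 | hy1
        · have : (1 - y : ℝ) = 0 := by rw [← hy1]; ring
          rw [this]
          have hx1 : (0:ℝ) < 1 - x := by linarith
          have : (0:ℝ) < y ^ (ℓ+1) * (1 - x) ^ (r+1) :=
            mul_pos (pow_pos (lt_trans hx0 hxy) _) (pow_pos hx1 _)
          simpa using this
        · calc x ^ (ℓ+1) * (1 - y) ^ (r+1)
              < y ^ (ℓ+1) * (1 - y) ^ (r+1) := by
                exact mul_lt_mul_of_pos_right
                  (pow_lt_pow_left₀ hxy hx.1 (Nat.succ_ne_zero _))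
                  (pow_pos (by linarith) _)
            _ ≤ y ^ (ℓ+1) * (1 - x) ^ (r+1) := by
                exact mul_le_mul_of_nonneg_left
                  (pow_le_pow_left₀ (by linarith) (by linarith) _)
                  (pow_nonneg (by linarith [hx.1]) _)
      · rw [← hx0]
        have : (0:ℝ) < y ^ (ℓ+1) * (1 - (0:ℝ)) ^ (r+1) := by
          rw [← hx0] at hxy
          exact mul_pos (pow_pos hxy _) (by norm_num)
        calc (0:ℝ) ^ (ℓ+1) * (1 - y) ^ (r+1) = 0 := by
              rw [zero_pow (Nat.succ_ne_zero _), zero_mul]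
          _ < y ^ (ℓ+1) * (1 - (0:ℝ)) ^ (r+1) := this
    calc x ^ (ℓ+1) * (y ^ (ℓ+1) + (1 - y) ^ (r+1))
        = y ^ (ℓ+1) * x ^ (ℓ+1) + x ^ (ℓ+1) * (1 - y) ^ (r+1) := by ring
      _ < y ^ (ℓ+1) * x ^ (ℓ+1) + y ^ (ℓ+1) * (1 - x) ^ (r+1) := by linarith
      _ = y ^ (ℓ+1) * (x ^ (ℓ+1) + (1 - x) ^ (r+1)) := by ring
  have hmaps : Set.MapsTo (rationalB ℓ r) (Set.Icc (0:ℝ) 1) (Set.Icc (0:ℝ) 1) := by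
    intro x hx
    have hD := rB_denom_pos (ℓ := ℓ) (r := r) hx
    constructor
    · exact div_nonneg (pow_nonneg hx.1 _) hD.le
      -- rationalB unfolds definitionally
    · rw [rationalB, div_le_one hD]
      exact le_add_of_nonneg_right (pow_nonneg (by linarith [hx.2]) _)
  have hsurj : Set.SurjOn (rationalB ℓ r) (Set.Icc (0:ℝ) 1) (Set.Icc (0:ℝ) 1) := by
    have := intermediate_value_Icc (by norm_num : (0:ℝ) ≤ 1) hcd.continuousOn
    rw [h0, h1] at this
    exact this
  refine ⟨hmono, hcd, h0, h1, hmaps, hsurj, ?_, ?_⟩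
  · intro j _ hj2
    rw [iteratedDerivWithin_eq_iteratedDeriv_of_isOpen j (rBU_open ℓ r)
      (rB_contDiffOn ℓ r) hsub (uniqueDiffOn_Icc one_pos) (by norm_num)]
    exact rationalB_iteratedDeriv_zero ℓ r j hj2
  · intro k hk1 hk2
    rw [iteratedDerivWithin_eq_iteratedDeriv_of_isOpen k (rBU_open ℓ r)
      (rB_contDiffOn ℓ r) hsub (uniqueDiffOn_Icc one_pos) (by norm_num)]
    exact rationalB_iteratedDeriv_one ℓ r k hk1 hk2
end

section
/- For every non-negative integer m, the normalized integral of an odd power of sine admits the cosine expansion T_m(x) = 1/2 − (1/(2a_m)) Σ_{j=0}^{m} a_{m,j} cos((2j+1)πx) for x ∈ [0,1], where a_{m,j} = (−1)^{m−j} C(2m+1, m−j)/(2j+1) and a_m = Σ_{j=0}^m a_{m,j}. -/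
/-!
Expanding `(2i sin θ)^(2m+1) = (e^{iθ} - e^{-iθ})^(2m+1)` binomially and pairing the terms `k`
and `2m+1-k` gives `(-4)^m sin^(2m+1) θ = ∑ⱼ (-1)^(m-j) C(2m+1, m-j) sin((2j+1)θ)`. Hence the
cosine sum `∑ⱼ a_{m,j} cos((2j+1)πx)` has derivative `-π (-4)^m sin^(2m+1)(πx)`, so both
integrals defining `T_m` are differences of its values; at `x = 0` and `x = 1` these are `a_m`
and `-a_m`.
-/

open Real

noncomputable def trigT (m : ℕ) (x : ℝ) : ℝ :=
  (∫ t in (0:ℝ)..x, Real.sin (π * t) ^ (2 * m + 1)) /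
    (∫ t in (0:ℝ)..(1:ℝ), Real.sin (π * t) ^ (2 * m + 1))

noncomputable def trigCoeff (m j : ℕ) : ℝ :=
  (-1 : ℝ) ^ (m - j) * ((2 * m + 1).choose (m - j) : ℝ) / (2 * j + 1)

open Finset

theorem Finset.sum_range_two_mul_add_two {M : Type*} [AddCommMonoid M] (g : ℕ → M) (n : ℕ) :
    ∑ k ∈ range (2 * n + 2), g k = ∑ j ∈ range (n + 1), (g (n - j) + g (n + 1 + j)) := by
  rw [show 2 * n + 2 = (n + 1) + (n + 1) by ring, sum_range_add, sum_add_distrib,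
    ← sum_range_reflect]
  simp only [add_tsub_cancel_right]

theorem Complex.two_mul_I_mul_sin_pow (z : ℂ) (n : ℕ) :
    (2 * I * sin z) ^ n =
      ∑ k ∈ range (n + 1), (-1) ^ k * (n.choose k : ℂ) * exp ((n - 2 * k) * z * I) := by
  have h : 2 * I * sin z = -exp (-z * I) + exp (z * I) := by
    rw [mul_assoc, mul_comm I, ← mul_assoc, two_sin, mul_assoc, I_mul_I]; ring
  rw [h, add_pow]
  refine sum_congr rfl fun k hk => ?_
  have hkn : k ≤ n := Nat.lt_succ_iff.mp (mem_range.mp hk)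
  have hexp : ((n : ℂ) - 2 * k) * z * I = k * (-z * I) + ((n - k : ℕ) : ℂ) * (z * I) := by
    push_cast [Nat.cast_sub hkn]; ring
  rw [neg_pow, ← exp_nat_mul, ← exp_nat_mul, hexp, exp_add]
  ring

theorem Real.sum_neg_one_pow_mul_choose_mul_sin (m : ℕ) (θ : ℝ) :
    ∑ k ∈ range (2 * m + 2), (-1) ^ k * ((2 * m + 1).choose k : ℝ) *
        sin ((2 * m + 1 - 2 * k : ℝ) * θ) = 2 * ((-4) ^ m * sin θ ^ (2 * m + 1)) := by
  have h := congrArg Complex.im (Complex.two_mul_I_mul_sin_pow θ (2 * m + 1))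
  have hsq : (2 * Complex.I * sin θ) ^ 2 = -4 * (sin θ : ℂ) ^ 2 := by
    rw [mul_pow, mul_pow, Complex.I_sq]; ring
  have hL : (2 * Complex.I * Complex.sin θ) ^ (2 * m + 1) =
      ((2 * ((-4) ^ m * sin θ ^ (2 * m + 1)) : ℝ) : ℂ) * Complex.I := by
    rw [← Complex.ofReal_sin, pow_succ, pow_mul, hsq]; push_cast; ring
  rw [hL, Complex.im_ofReal_mul, Complex.I_im, mul_one, Complex.im_sum] at h
  rw [h]
  refine sum_congr rfl fun k _ => ?_
  have hterm : (-1 : ℂ) ^ k * ((2 * m + 1).choose k : ℂ) *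
        Complex.exp ((↑(2 * m + 1) - 2 * ↑k) * ↑θ * Complex.I) =
      (((-1) ^ k * (2 * m + 1).choose k : ℝ) : ℂ) *
          Complex.exp (((2 * m + 1 - 2 * k : ℝ) * θ : ℝ) * Complex.I) := by
    push_cast; ring_nf
  rw [hterm, Complex.im_ofReal_mul, Complex.exp_ofReal_mul_I_im]

theorem Real.neg_four_pow_mul_sin_pow_odd (m : ℕ) (θ : ℝ) :
    (-4) ^ m * sin θ ^ (2 * m + 1) =
      ∑ j ∈ range (m + 1), (-1) ^ (m - j) * ((2 * m + 1).choose (m - j) : ℝ) *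
        sin ((2 * j + 1) * θ) := by
  rw [← mul_right_inj' (two_ne_zero (α := ℝ)), ← Real.sum_neg_one_pow_mul_choose_mul_sin,
    sum_range_two_mul_add_two, mul_sum]
  refine sum_congr rfl fun j hj => ?_
  obtain ⟨d, rfl⟩ := Nat.exists_eq_add_of_le (Nat.lt_succ_iff.mp (mem_range.mp hj))
  rw [Nat.add_sub_cancel_left,
    Nat.choose_symm_of_eq_add (show 2 * (j + d) + 1 = j + d + 1 + j + d by ring)]
  push_cast
  rw [show (2 * (j + d : ℝ) + 1 - 2 * d) = 2 * j + 1 by ring,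
    show (2 * (j + d : ℝ) + 1 - 2 * (j + d + 1 + j)) * θ = -((2 * j + 1) * θ) by ring, sin_neg,
    show j + d + 1 + j = d + 1 + 2 * j by ring, pow_add, pow_add, pow_mul, pow_one, neg_one_sq,
    one_pow]
  ring

noncomputable def trigCosSum (m : ℕ) (x : ℝ) : ℝ :=
  ∑ j ∈ range (m + 1), trigCoeff m j * cos ((2 * j + 1) * π * x)

theorem trigCoeff_mul_two_mul_add_one (m j : ℕ) :
    trigCoeff m j * (2 * j + 1) = (-1) ^ (m - j) * ((2 * m + 1).choose (m - j) : ℝ) :=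
  div_mul_cancel₀ _ (by positivity)

theorem hasDerivAt_trigCosSum (m : ℕ) (x : ℝ) :
    HasDerivAt (trigCosSum m) (-(π * ((-4) ^ m * sin (π * x) ^ (2 * m + 1)))) x := by
  have hterm (j : ℕ) : HasDerivAt (fun x => trigCoeff m j * cos ((2 * j + 1) * π * x))
      (-(π * ((-1) ^ (m - j) * ((2 * m + 1).choose (m - j) : ℝ) * sin ((2 * j + 1) * (π * x)))))
      x := by
    refine (((hasDerivAt_id' x).const_mul ((2 * j + 1) * π)).cos.const_mul _).congr_deriv ?_
    rw [← trigCoeff_mul_two_mul_add_one]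
    ring_nf
  rw [Real.neg_four_pow_mul_sin_pow_odd, mul_sum, ← sum_neg_distrib]
  exact HasDerivAt.fun_sum fun j _ => hterm j

theorem trigCosSum_zero (m : ℕ) : trigCosSum m 0 = ∑ j ∈ range (m + 1), trigCoeff m j := by
  simp [trigCosSum]

theorem trigCosSum_one (m : ℕ) : trigCosSum m 1 = -trigCosSum m 0 := by
  simp only [trigCosSum, mul_one, mul_zero, cos_zero, ← sum_neg_distrib]
  refine sum_congr rfl fun j _ => ?_
  rw [show (2 * j + 1 : ℝ) * π = ((2 * j + 1 : ℕ) : ℝ) * π by push_cast; ring,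
    cos_nat_mul_pi, (odd_two_mul_add_one j).neg_one_pow]
  ring

theorem integral_sin_pi_mul_pow_odd (m : ℕ) (x : ℝ) :
    ∫ t in (0 : ℝ)..x, sin (π * t) ^ (2 * m + 1) =
      (trigCosSum m 0 - trigCosSum m x) / (π * (-4) ^ m) := by
  have hc : π * (-4 : ℝ) ^ m ≠ 0 := by positivity
  have hftc := intervalIntegral.integral_eq_sub_of_hasDerivAt (a := 0) (b := x)
    (fun t _ => hasDerivAt_trigCosSum m t) (by apply Continuous.intervalIntegrable; fun_prop)
  rw [intervalIntegral.integral_neg, intervalIntegral.integral_const_mul,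
    intervalIntegral.integral_const_mul] at hftc
  rw [eq_div_iff hc]
  linarith

theorem integral_sin_pi_mul_pow_pos (n : ℕ) : 0 < ∫ t in (0 : ℝ)..1, sin (π * t) ^ n := by
  rw [intervalIntegral.integral_comp_mul_left (fun u => sin u ^ n) pi_ne_zero, mul_zero, mul_one,
    smul_eq_mul]
  exact mul_pos (inv_pos.mpr pi_pos) (integral_sin_pow_pos n)

theorem trigT_cosine_expansion (m : ℕ) :
    ∀ x ∈ Set.Icc (0:ℝ) 1,
      trigT m x = 1 / 2 - (1 / (2 * ∑ j ∈ Finset.range (m + 1), trigCoeff m j)) *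
        ∑ j ∈ Finset.range (m + 1),
          trigCoeff m j * Real.cos ((2 * j + 1) * π * x) := by
  intro x _
  have hc : π * (-4 : ℝ) ^ m ≠ 0 := by positivity
  have hpos := integral_sin_pi_mul_pow_pos (2 * m + 1)
  rw [integral_sin_pi_mul_pow_odd, trigCosSum_one] at hpos
  have hA : trigCosSum m 0 ≠ 0 := by
    intro h
    simp [h] at hpos
  rw [trigT, integral_sin_pi_mul_pow_odd, integral_sin_pi_mul_pow_odd, trigCosSum_one,
    ← trigCosSum_zero]
  change _ = _ - _ * trigCosSum m x
  field_simp
  ring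
end

section
/- For every positive integer m and every k with 1 ≤ k ≤ m, the binomial identity Σ_{j=0}^{m} (−1)^{m−j} (2j+1)^{2k−1} C(2m+1, m−j) = 0 holds. -/
/-!
With `n = 2m + 1` and `d = 2k - 1 < n`, put `F i = (-1)^(n-i) C(n,i) (2i - n)^d`. Since
`i ↦ (2i - n)^d` is a polynomial of degree `< n`, the `n`-th forward difference kills it, i.e.
`∑_{i ≤ n} F i = 0`. As `n` and `d` are odd, `F (n - i) = F i`, so the full sum is twice the sum
over the upper half `i = m + 1 + j`, `j ≤ m`, which is term by term the sum in the theorem.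
-/

open Finset Polynomial

theorem Polynomial.sum_range_neg_one_pow_mul_choose_mul_eval_eq_zero {R : Type*} [CommRing R]
    (P : R[X]) {n : ℕ} (hP : P.natDegree < n) :
    ∑ i ∈ range (n + 1), (-1 : R) ^ (n - i) * n.choose i * P.eval (i : R) = 0 := by
  have h := congrFun (P.fwdDiff_iter_eq_zero_of_degree_lt hP) 0
  rw [fwdDiff_iter_eq_sum_shift] at h
  simpa [zsmul_eq_mul] using h

theorem Finset.sum_range_two_mul_add_two_eq_two_nsmul_of_symm {M : Type*} [AddCommMonoid M]
    (f : ℕ → M) (m : ℕ) (hf : ∀ i ≤ 2 * m + 1, f (2 * m + 1 - i) = f i) :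
    ∑ i ∈ range (2 * m + 2), f i = 2 • ∑ j ∈ range (m + 1), f (m + 1 + j) := by
  have hlower : ∑ i ∈ range (m + 1), f i = ∑ j ∈ range (m + 1), f (m + 1 + j) := by
    rw [← sum_range_reflect]
    refine sum_congr rfl fun j hj_mem ↦ ?_
    have hj : j ≤ m := Nat.lt_succ_iff.mp (mem_range.mp hj_mem)
    rw [Nat.add_sub_cancel, ← hf (m - j) (by omega)]
    congr 1
    omega
  rw [show 2 * m + 2 = (m + 1) + (m + 1) by ring, sum_range_add, hlower, two_nsmul]

theorem neg_one_pow_sub_of_odd {R : Type*} [Ring R] {n i : ℕ} (hn : Odd n) (hi : i ≤ n) :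
    (-1 : R) ^ (n - i) = -(-1) ^ i := by
  obtain ⟨c, rfl⟩ := hn
  rw [neg_one_pow_eq_pow_mod_two, neg_one_pow_eq_pow_mod_two (n := i)]
  rcases Nat.mod_two_eq_zero_or_one i with h | h <;>
  · rw [show (2 * c + 1 - i) % 2 = 1 - i % 2 by omega, h]
    norm_num

theorem trig_binomial_identity_general (m k : ℕ) (hk : 1 ≤ k) (hkm : k ≤ m) :
    ∑ j ∈ Finset.range (m + 1),
      (-1 : ℝ) ^ (m - j) * ((2 * j + 1 : ℝ)) ^ (2 * k - 1) *
        ((2 * m + 1).choose (m - j) : ℝ) = 0 := by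
  set n := 2 * m + 1
  set d := 2 * k - 1
  have hn : Odd n := odd_two_mul_add_one m
  have hd : Odd d := ⟨k - 1, by omega⟩
  set F : ℕ → ℝ := fun i ↦ (-1) ^ (n - i) * n.choose i * (2 * i - n) ^ d
  have hF_sum : ∑ i ∈ range (n + 1), F i = 0 := by
    have hdeg : ((C 2 * X - C (n : ℝ)) ^ d).natDegree < n :=
      (show _ ≤ d by compute_degree!).trans_lt (by omega)
    have := (C 2 * X - C (n : ℝ)) ^ d |>.sum_range_neg_one_pow_mul_choose_mul_eval_eq_zero hdeg
    simpa only [eval_pow, eval_sub, eval_mul, eval_C, eval_X] using this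
  have hF_symm : ∀ i ≤ n, F (n - i) = F i := by
    intro i hi
    simp only [F, Nat.sub_sub_self hi, Nat.choose_symm hi, Nat.cast_sub hi,
      neg_one_pow_sub_of_odd hn hi]
    rw [show 2 * ((n : ℝ) - i) - n = -(2 * i - n) by ring, hd.neg_pow]
    ring
  have hupper : ∑ j ∈ range (m + 1), F (m + 1 + j) = 0 := by
    have h := sum_range_two_mul_add_two_eq_two_nsmul_of_symm F m hF_symm
    rwa [hF_sum, eq_comm, smul_eq_zero_iff_right two_ne_zero] at h
  rw [← hupper]
  refine sum_congr rfl fun j hj_mem ↦ ?_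
  have hj : j ≤ m := Nat.lt_succ_iff.mp (mem_range.mp hj_mem)
  simp only [F]
  rw [← Nat.choose_symm (show m + 1 + j ≤ n by omega), show n - (m + 1 + j) = m - j by omega]
  push_cast [n]
  ring

theorem trig_binomial_identity (m k : ℕ) (hm : 1 ≤ m) (hk : 1 ≤ k) (hkm : k ≤ m) :
    ∑ j ∈ Finset.range (m + 1),
      (-1 : ℝ) ^ (m - j) * ((2 * j + 1 : ℝ)) ^ (2 * k - 1) *
        ((2 * m + 1).choose (m - j) : ℝ) = 0 :=
  trig_binomial_identity_general m k hk hkm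
end
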